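/- Fix an integer d ≥ 1 and a real s > d, and let U^d = [0,1]^d be the unit cube in ℝ^d. Then the limit g_{s,d}(U^d) := lim_{N→∞} ℰ_s(U^d,N)/N^{1+s/d} exists and is a finite positive real number. -/

import Mathlib

/-!
Lower bound: cut the cube into `(m + 1) ^ d ≤ N / 2` cells of side `1 / m ≍ N ^ (-1 / d)`; by
Cauchy–Schwarz at least `N` ordered pairs of an `N`-point configuration share a cell, and each
contributes at least `(√d / m) ^ (-s) ≍ N ^ (s / d)`.

Limit: place a copy of an `N`-point configuration, shrunk by `(1 - t) / m`, in each of the `m ^ d`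
subcubes of side `1 / m`, leaving gaps of width `t / m`. The self-interactions scale exactly, and
since `s > d` the interactions between cells are summable over the lattice, so
`ℰ(m ^ d N) ≤ m ^ (d + s) ((1 - t) ^ (-s) ℰ(N) + O_t(N ^ 2))`. After normalising by
`(m ^ d N) ^ (1 + s / d)` the error is `O_t(N ^ (1 - s / d)) → 0`; choosing `N` with a nearly
minimal ratio and using that `ℰ` is monotone in the number of points to interpolate between the
`m ^ d N` shows that the `limsup` of `ℰ(N) / N ^ (1 + s / d)` does not exceed its `liminf`.
-/

open scoped ENNReal NNReal BigOperators Classical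
open MeasureTheory Filter Metric Set Topology

/-- The Riesz `s`-energy of a finite configuration `ω`, valued in `[0,∞]`. -/
noncomputable def rieszEnergy {E : Type*} [PseudoEMetricSpace E] (s : ℝ) (ω : Finset E) : ℝ≥0∞ :=
  ∑ x ∈ ω, ∑ y ∈ ω, if x = y then 0 else edist x y ^ (-s)

/-- The `N`-point minimal Riesz `s`-energy over a set `A` (infimum over all `N`-point
subsets of `A`; `∞` if there is none). -/
noncomputable def minRieszEnergy {E : Type*} [PseudoEMetricSpace E] (s : ℝ) (A : Set E)
    (N : ℕ) : ℝ≥0∞ :=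
  ⨅ (ω : Finset E) (_ : ↑ω ⊆ A) (_ : ω.card = N), rieszEnergy s ω

/-- The unit cube `[0,1]^d` in `ℝ^d`. -/
def unitCube (d : ℕ) : Set (EuclideanSpace ℝ (Fin d)) := {x | ∀ i, x i ∈ Set.Icc (0 : ℝ) 1}

noncomputable def rieszKernel {E : Type*} [PseudoEMetricSpace E] (s : ℝ) (x y : E) : ℝ≥0∞ :=
  if x = y then 0 else edist x y ^ (-s)

section General

variable {E : Type*} [PseudoEMetricSpace E] {s : ℝ}

theorem rieszEnergy_eq_sum_rieszKernel (ω : Finset E) :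
    rieszEnergy s ω = ∑ x ∈ ω, ∑ y ∈ ω, rieszKernel s x y := rfl

@[simp]
theorem rieszKernel_self (x : E) : rieszKernel s x x = 0 := if_pos rfl

theorem minRieszEnergy_le {A : Set E} {ω : Finset E} (hA : ↑ω ⊆ A) :
    minRieszEnergy s A ω.card ≤ rieszEnergy s ω :=
  iInf₂_le_of_le ω hA (iInf_le _ rfl)

theorem rieszEnergy_mono {ω ω' : Finset E} (h : ω ⊆ ω') :
    rieszEnergy s ω ≤ rieszEnergy s ω' :=
  (Finset.sum_le_sum fun _ _ => Finset.sum_le_sum_of_subset h).trans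
    (Finset.sum_le_sum_of_subset h)

theorem minRieszEnergy_mono (A : Set E) : Monotone (minRieszEnergy s A) := by
  intro N M hNM
  refine le_iInf₂ fun ω hω => le_iInf fun hcard => ?_
  obtain ⟨ω', hω', rfl⟩ := Finset.exists_subset_card_eq (hcard ▸ hNM)
  exact (minRieszEnergy_le ((Finset.coe_subset.2 hω').trans hω)).trans (rieszEnergy_mono hω')

theorem le_mul_minRieszEnergy_add {A : Set E} {N : ℕ} {X k R : ℝ≥0∞} (hk₀ : k ≠ 0)
    (hk : k ≠ ⊤) (h : ∀ ω : Finset E, ↑ω ⊆ A → ω.card = N → X ≤ k * rieszEnergy s ω + R) :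
    X ≤ k * minRieszEnergy s A N + R := by
  simp only [minRieszEnergy, ENNReal.mul_iInf_of_ne hk₀ hk, ENNReal.iInf_add]
  exact le_iInf₂ fun ω hω => le_iInf (h ω hω)

theorem rieszEnergy_biUnion [DecidableEq E] {ι : Type*} [DecidableEq ι] {I : Finset ι}
    {ω : ι → Finset E} (hω : (I : Set ι).PairwiseDisjoint ω) :
    rieszEnergy s (I.biUnion ω) = ∑ b ∈ I, rieszEnergy s (ω b) +
      ∑ b ∈ I, ∑ b' ∈ I.erase b, ∑ x ∈ ω b, ∑ y ∈ ω b', rieszKernel s x y := by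
  simp only [rieszEnergy_eq_sum_rieszKernel, Finset.sum_biUnion hω, ← Finset.sum_add_distrib]
  refine Finset.sum_congr rfl fun b hb => ?_
  rw [Finset.sum_comm, ← Finset.add_sum_erase _ _ hb]

theorem sum_rieszEnergy_le_rieszEnergy_biUnion [DecidableEq E] {ι : Type*} {I : Finset ι}
    {ω : ι → Finset E} (hω : (I : Set ι).PairwiseDisjoint ω) :
    ∑ b ∈ I, rieszEnergy s (ω b) ≤ rieszEnergy s (I.biUnion ω) :=
  (rieszEnergy_biUnion hω).symm ▸ le_self_add

end General

theorem sq_sum_div_card_sub_sum_le {ι : Type*} (t : Finset ι) (n : ι → ℕ) :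
    ((∑ b ∈ t, n b : ℕ) : ℝ) ^ 2 / t.card - (∑ b ∈ t, n b : ℕ) ≤
      ∑ b ∈ t, ((n b * (n b - 1) : ℕ) : ℝ) := by
  have hcast : ∀ k : ℕ, ((k * (k - 1) : ℕ) : ℝ) = (k : ℝ) ^ 2 - k := by
    rintro (_ | k) <;> push_cast <;> ring
  have hCS : ((∑ b ∈ t, n b : ℕ) : ℝ) ^ 2 / t.card ≤ ∑ b ∈ t, (n b : ℝ) ^ 2 :=
    div_le_of_le_mul₀ (Nat.cast_nonneg _) (by positivity)
      (by simpa [mul_comm] using sq_sum_le_card_mul_sum_sq (s := t) (f := fun b => (n b : ℝ)))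
  simp only [hcast, Finset.sum_sub_distrib, Nat.cast_sum]
  push_cast at hCS
  linarith

section Metric

variable {E F : Type*} [MetricSpace E] [MetricSpace F] {s : ℝ}

theorem rieszKernel_of_ne {x y : E} (h : x ≠ y) :
    rieszKernel s x y = ENNReal.ofReal (dist x y ^ (-s)) := by
  rw [rieszKernel, if_neg h, edist_dist, ENNReal.ofReal_rpow_of_pos (dist_pos.2 h)]

theorem le_rieszKernel_of_dist_le (hs : 0 ≤ s) {x y : E} (hxy : x ≠ y) {r : ℝ}
    (h : dist x y ≤ r) : ENNReal.ofReal (r ^ (-s)) ≤ rieszKernel s x y := by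
  rw [rieszKernel_of_ne hxy]
  exact ENNReal.ofReal_le_ofReal
    (Real.rpow_le_rpow_of_nonpos (dist_pos.2 hxy) h (neg_nonpos.2 hs))

theorem rieszEnergy_ne_top (ω : Finset E) : rieszEnergy s ω ≠ ⊤ := by
  rw [rieszEnergy_eq_sum_rieszKernel]
  refine ENNReal.sum_ne_top.2 fun x _ => ENNReal.sum_ne_top.2 fun y _ => ?_
  by_cases h : x = y
  · simp [h]
  · simp [rieszKernel_of_ne h]

theorem minRieszEnergy_ne_top {A : Set E} (hA : A.Infinite) (N : ℕ) :
    minRieszEnergy s A N ≠ ⊤ := by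
  obtain ⟨ω, hω, rfl⟩ := hA.exists_subset_card_eq N
  exact ne_top_of_le_ne_top (rieszEnergy_ne_top ω) (minRieszEnergy_le hω)

theorem injective_of_dist_eq_mul {T : E → F} {c : ℝ} (hc : c ≠ 0)
    (hT : ∀ x y, dist (T x) (T y) = c * dist x y) : Function.Injective T := fun x y h => by
  have := (hT x y).symm.trans (by rw [h, dist_self])
  exact dist_eq_zero.1 ((mul_eq_zero.1 this).resolve_left hc)

theorem rieszEnergy_image_of_dist_eq [DecidableEq F] {T : E → F} {c : ℝ} (hc : 0 < c)
    (hT : ∀ x y, dist (T x) (T y) = c * dist x y) (ω : Finset E) :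
    rieszEnergy s (ω.image T) = ENNReal.ofReal (c ^ (-s)) * rieszEnergy s ω := by
  have hinj := injective_of_dist_eq_mul hc.ne' hT
  simp only [rieszEnergy_eq_sum_rieszKernel, Finset.sum_image hinj.injOn, Finset.mul_sum]
  refine Finset.sum_congr rfl fun x _ => Finset.sum_congr rfl fun y _ => ?_
  by_cases h : x = y
  · simp [h]
  rw [rieszKernel_of_ne h, rieszKernel_of_ne (hinj.ne h), hT, ← ENNReal.ofReal_mul
    (by positivity), Real.mul_rpow hc.le dist_nonneg]

theorem natCast_mul_le_rieszEnergy (hs : 0 ≤ s) {ω : Finset E} {r : ℝ}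
    (h : ∀ x ∈ ω, ∀ y ∈ ω, dist x y ≤ r) :
    ((ω.card * (ω.card - 1) : ℕ) : ℝ≥0∞) * ENNReal.ofReal (r ^ (-s)) ≤ rieszEnergy s ω := by
  rw [rieszEnergy_eq_sum_rieszKernel, Nat.cast_mul, mul_assoc, ← nsmul_eq_mul,
    ← Finset.sum_const]
  refine Finset.sum_le_sum fun x hx => ?_
  rw [← Finset.card_erase_of_mem hx, ← nsmul_eq_mul, ← Finset.sum_const]
  refine (Finset.sum_le_sum fun y hy => ?_).trans (Finset.sum_le_sum_of_subset (ω.erase_subset x))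
  exact le_rieszKernel_of_dist_le hs (Finset.ne_of_mem_erase hy).symm
    (h x hx y (Finset.mem_of_mem_erase hy))

theorem le_rieszEnergy_of_fibers {ι : Type*} (hs : 0 ≤ s) {ω : Finset E} {t : Finset ι}
    {q : E → ι} (hq : ∀ x ∈ ω, q x ∈ t) {r : ℝ} (hr : 0 ≤ r)
    (hqr : ∀ x ∈ ω, ∀ y ∈ ω, q x = q y → dist x y ≤ r) :
    ENNReal.ofReal (((ω.card : ℝ) ^ 2 / t.card - ω.card) * r ^ (-s)) ≤ rieszEnergy s ω := by
  set fiber : ι → Finset E := fun b => ω.filter (q · = b)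
  have hcount := sq_sum_div_card_sub_sum_le t fun b => (fiber b).card
  rw [← Finset.card_eq_sum_card_fiberwise hq] at hcount
  calc ENNReal.ofReal (((ω.card : ℝ) ^ 2 / t.card - ω.card) * r ^ (-s))
      ≤ ENNReal.ofReal ((∑ b ∈ t, ((fiber b).card * ((fiber b).card - 1) : ℕ) : ℝ) * r ^ (-s)) :=
        ENNReal.ofReal_le_ofReal
          (mul_le_mul_of_nonneg_right hcount (Real.rpow_nonneg hr _))
    _ = ∑ b ∈ t, (((fiber b).card * ((fiber b).card - 1) : ℕ) : ℝ≥0∞) *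
          ENNReal.ofReal (r ^ (-s)) := by
        rw [ENNReal.ofReal_mul (by positivity), ← Finset.sum_mul, ENNReal.ofReal_sum_of_nonneg
          (fun _ _ => Nat.cast_nonneg _)]
        simp only [ENNReal.ofReal_natCast]
    _ ≤ ∑ b ∈ t, rieszEnergy s (fiber b) :=
        Finset.sum_le_sum fun b _ => natCast_mul_le_rieszEnergy hs fun x hx y hy =>
          hqr x (Finset.mem_of_mem_filter x hx) y (Finset.mem_of_mem_filter y hy)
            ((Finset.mem_filter.1 hx).2.trans (Finset.mem_filter.1 hy).2.symm)
    _ ≤ rieszEnergy s (t.biUnion fiber) :=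
        sum_rieszEnergy_le_rieszEnergy_biUnion (Set.pairwiseDisjoint_filter q _ ω)
    _ = rieszEnergy s ω := by rw [Finset.biUnion_filter_eq_of_maps_to hq]

/-- Multiplying the `d` lower bounds on `dist x y` gives a product form, so that the sum over a
lattice of separations factors over the coordinates. -/
theorem rieszKernel_le_prod_rpow {d : ℕ} (hd : d ≠ 0) (hs : 0 ≤ s) {c : ℝ} (hc : 0 < c)
    {a : Fin d → ℝ} (ha : ∀ i, 1 ≤ a i) {x y : E} (h : ∀ i, c * a i ≤ dist x y) :
    rieszKernel s x y ≤ ENNReal.ofReal (c ^ (-s) * ∏ i, a i ^ (-(s / d))) := by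
  have ha0 : ∀ i, 0 ≤ a i := fun i => zero_le_one.trans (ha i)
  have hxy : 0 < dist x y :=
    (mul_pos hc (one_pos.trans_le (ha ⟨0, Nat.pos_of_ne_zero hd⟩))).trans_le (h _)
  have hprod : c ^ d * ∏ i, a i ≤ dist x y ^ d := by
    calc c ^ d * ∏ i, a i = ∏ i, c * a i := by simp [Finset.prod_mul_distrib]
      _ ≤ ∏ _i : Fin d, dist x y :=
          Finset.prod_le_prod (fun i _ => mul_nonneg hc.le (ha0 i)) fun i _ => h i
      _ = dist x y ^ d := by simp
  have hd' : (d : ℝ) ≠ 0 := Nat.cast_ne_zero.2 hd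
  rw [rieszKernel_of_ne (dist_pos.1 hxy)]
  refine ENNReal.ofReal_le_ofReal ?_
  calc dist x y ^ (-s) = (dist x y ^ d) ^ (-(s / d)) := by
        rw [← Real.rpow_natCast, ← Real.rpow_mul hxy.le]
        field_simp
    _ ≤ (c ^ d * ∏ i, a i) ^ (-(s / d)) :=
        Real.rpow_le_rpow_of_nonpos
          (mul_pos (pow_pos hc d) (Finset.prod_pos fun i _ => one_pos.trans_le (ha i))) hprod
          (neg_nonpos.2 (by positivity))
    _ = c ^ (-s) * ∏ i, a i ^ (-(s / d)) := by
        rw [Real.mul_rpow (by positivity) (Finset.prod_nonneg fun i _ => ha0 i),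
          Real.finsetProd_rpow _ _ (fun i _ => ha0 i), ← Real.rpow_natCast,
          ← Real.rpow_mul hc.le]
        field_simp

end Metric

theorem summable_one_add_abs_int_rpow {a : ℝ} (ha : 1 < a) :
    Summable fun n : ℤ => (1 + |(n : ℝ)|) ^ (-a) := by
  have hnat : Summable fun k : ℕ => (1 + (k : ℝ)) ^ (-a) := by
    have := (summable_nat_add_iff 1).2 (Real.summable_nat_rpow.2 (by linarith : -a < -1))
    simpa [add_comm] using this
  exact .of_nat_of_neg (by simpa using hnat) (by simpa using hnat)

theorem sum_fin_one_add_abs_rpow_le_tsum {a : ℝ} (ha : 1 < a) (m c : ℕ) :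
    ∑ j : Fin m, (1 + |(c : ℝ) - j|) ^ (-a) ≤ ∑' n : ℤ, (1 + |(n : ℝ)|) ^ (-a) := by
  have hinj : Function.Injective fun j : Fin m => (c : ℤ) - (j : ℕ) := fun j j' h => by
    simpa [Fin.ext_iff] using h
  have := tsum_comp_le_tsum_of_inj (summable_one_add_abs_int_rpow ha) (fun _ => by positivity)
    hinj
  simpa [tsum_fintype] using this

theorem sum_prod_one_add_abs_rpow_le {a : ℝ} (ha : 1 < a) {d : ℕ} (m : ℕ) (c : Fin d → ℕ) :
    ∑ b : Fin d → Fin m, ∏ i, (1 + |(c i : ℝ) - b i|) ^ (-a) ≤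
      (∑' n : ℤ, (1 + |(n : ℝ)|) ^ (-a)) ^ d := by
  rw [← Fintype.prod_sum (fun i (j : Fin m) => (1 + |(c i : ℝ) - j|) ^ (-a))]
  calc ∏ i, ∑ j : Fin m, (1 + |(c i : ℝ) - j|) ^ (-a)
      ≤ ∏ _i : Fin d, ∑' n : ℤ, (1 + |(n : ℝ)|) ^ (-a) :=
        Finset.prod_le_prod (fun _ _ => by positivity)
          fun i _ => sum_fin_one_add_abs_rpow_le_tsum ha m (c i)
    _ = _ := by simp

section Rescaling

variable {d : ℕ} {s : ℝ} {e : ℕ → ℝ}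

/-- Comparison of `e M` with `e (m ^ d * N₀)` for the least `m` with `M ≤ m ^ d * N₀`. -/
theorem div_rpow_le_of_forall_le_mul (hd : d ≠ 0) (he : Monotone e) {N₀ : ℕ} (hN₀ : 0 < N₀)
    {B : ℝ} (h : ∀ m : ℕ, 0 < m → e (m ^ d * N₀) ≤ (m : ℝ) ^ ((d : ℝ) + s) * B) {M : ℕ}
    (hM : 0 < M) :
    e M / (M : ℝ) ^ (1 + s / d) ≤ B / (N₀ : ℝ) ^ (1 + s / d) *
      ((⌈((M : ℝ) / N₀) ^ (d⁻¹ : ℝ)⌉₊ : ℝ) / ((M : ℝ) / N₀) ^ (d⁻¹ : ℝ)) ^ ((d : ℝ) + s) := by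
  set y := ((M : ℝ) / N₀) ^ (d⁻¹ : ℝ)
  have hN₀' : (0 : ℝ) < N₀ := Nat.cast_pos.2 hN₀
  have hy : 0 < y := by positivity
  have hyd : y ^ d = M / N₀ := Real.rpow_inv_natCast_pow (by positivity) hd
  have hMm : M ≤ ⌈y⌉₊ ^ d * N₀ := by
    have : (M : ℝ) ≤ (⌈y⌉₊ : ℝ) ^ d * N₀ := by
      rw [← div_le_iff₀ hN₀', ← hyd]
      exact pow_le_pow_left₀ hy.le (Nat.le_ceil y) d
    exact_mod_cast this
  have hMp : (M : ℝ) ^ (1 + s / d) = y ^ ((d : ℝ) + s) * (N₀ : ℝ) ^ (1 + s / d) := by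
    have hexp : (d⁻¹ : ℝ) * (d + s) = 1 + s / d := by field_simp
    rw [← Real.rpow_mul (by positivity), hexp, ← Real.mul_rpow (by positivity) hN₀'.le,
      div_mul_cancel₀ _ hN₀'.ne']
  calc e M / (M : ℝ) ^ (1 + s / d) ≤ e (⌈y⌉₊ ^ d * N₀) / (M : ℝ) ^ (1 + s / d) :=
        div_le_div_of_nonneg_right (he hMm) (by positivity)
    _ ≤ (⌈y⌉₊ : ℝ) ^ ((d : ℝ) + s) * B / (M : ℝ) ^ (1 + s / d) :=
        div_le_div_of_nonneg_right (h _ (Nat.ceil_pos.2 hy)) (by positivity)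
    _ = _ := by
        rw [hMp, Real.div_rpow (Nat.cast_nonneg _) hy.le]
        field_simp

theorem tendsto_ceil_div_rpow_atTop (hd : d ≠ 0) {N₀ : ℕ} (hN₀ : 0 < N₀) :
    Tendsto (fun M : ℕ =>
      ((⌈((M : ℝ) / N₀) ^ (d⁻¹ : ℝ)⌉₊ : ℝ) / ((M : ℝ) / N₀) ^ (d⁻¹ : ℝ)) ^ ((d : ℝ) + s))
      atTop (𝓝 1) := by
  have hy : Tendsto (fun M : ℕ => ((M : ℝ) / N₀) ^ (d⁻¹ : ℝ)) atTop atTop :=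
    (tendsto_rpow_atTop (by positivity)).comp
      (tendsto_natCast_atTop_atTop.atTop_div_const (Nat.cast_pos.2 hN₀))
  simpa using (tendsto_nat_ceil_div_atTop.comp hy).rpow_const (Or.inl one_ne_zero)

theorem isBoundedUnder_and_limsup_div_rpow_le (hd : d ≠ 0) (he0 : 0 ≤ e)
    (he : Monotone e) {N₀ : ℕ} (hN₀ : 0 < N₀) {B : ℝ}
    (h : ∀ m : ℕ, 0 < m → e (m ^ d * N₀) ≤ (m : ℝ) ^ ((d : ℝ) + s) * B) :
    IsBoundedUnder (· ≤ ·) atTop (fun N : ℕ => e N / (N : ℝ) ^ (1 + s / d)) ∧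
      limsup (fun N : ℕ => e N / (N : ℝ) ^ (1 + s / d)) atTop ≤
        B / (N₀ : ℝ) ^ (1 + s / d) := by
  have hg := (tendsto_ceil_div_rpow_atTop (s := s) hd hN₀).const_mul (B / (N₀ : ℝ) ^ (1 + s / d))
  rw [mul_one] at hg
  have hle : (fun N : ℕ => e N / (N : ℝ) ^ (1 + s / d)) ≤ᶠ[atTop] _ :=
    (eventually_gt_atTop 0).mono fun M hM => div_rpow_le_of_forall_le_mul hd he hN₀ h hM
  have hcobdd : IsCoboundedUnder (· ≤ ·) atTop fun N : ℕ => e N / (N : ℝ) ^ (1 + s / d) :=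
    (isBoundedUnder_of ⟨0, fun N => div_nonneg (he0 N) (by positivity)⟩).isCoboundedUnder_le
  exact ⟨hg.isBoundedUnder_le.mono_le hle,
    (limsup_le_limsup hle hcobdd hg.isBoundedUnder_le).trans hg.limsup_eq.le⟩

/-- A Fekete-type argument: as `s > d` the error term `N ^ 2` is of lower order than
`N ^ (1 + s / d)`, so the scaling relation pushes the `limsup` of the ratio down to its `liminf`. -/
theorem exists_tendsto_div_rpow_of_le_rpow_mul (hd : d ≠ 0) (hs : (d : ℝ) < s) (he0 : 0 ≤ e)
    (he : Monotone e) {K : ℝ}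
    (hrec : ∀ m N : ℕ, 0 < m → 0 < N → ∀ t ∈ Ioo (0 : ℝ) 1,
      e (m ^ d * N) ≤ (m : ℝ) ^ ((d : ℝ) + s) * ((1 - t) ^ (-s) * e N + K * t ^ (-s) * N ^ 2)) :
    ∃ L, Tendsto (fun N : ℕ => e N / (N : ℝ) ^ (1 + s / d)) atTop (𝓝 L) := by
  set τ := fun N : ℕ => e N / (N : ℝ) ^ (1 + s / d)
  have hd' : (0 : ℝ) < d := Nat.cast_pos.2 (Nat.pos_of_ne_zero hd)
  have key : ∀ t ∈ Ioo (0 : ℝ) 1, ∀ N₀ : ℕ, 0 < N₀ → IsBoundedUnder (· ≤ ·) atTop τ ∧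
      limsup τ atTop ≤ (1 - t) ^ (-s) * τ N₀ + K * t ^ (-s) * (N₀ : ℝ) ^ (-(s / d - 1)) := by
    intro t ht N₀ hN₀
    convert isBoundedUnder_and_limsup_div_rpow_le hd he0 he hN₀ fun m hm => hrec m N₀ hm hN₀ t ht
      using 2
    rw [add_div, mul_div_assoc, mul_div_assoc, ← Real.rpow_natCast (N₀ : ℝ) 2,
      ← Real.rpow_sub (Nat.cast_pos.2 hN₀)]
    push_cast
    simp only [τ]
    ring_nf
  have hbdd := (key (1 / 2) ⟨by norm_num, by norm_num⟩ 1 one_pos).1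
  have hcobdd : IsBoundedUnder (· ≥ ·) atTop τ :=
    isBoundedUnder_of ⟨0, fun N => div_nonneg (he0 N) (by positivity)⟩
  set L := liminf τ atTop
  have hlimsup : ∀ t ∈ Ioo (0 : ℝ) 1, limsup τ atTop ≤ (1 - t) ^ (-s) * (L + t) + t := by
    intro t ht
    have herr : Tendsto (fun N : ℕ => K * t ^ (-s) * (N : ℝ) ^ (-(s / d - 1))) atTop (𝓝 0) := by
      have := ((tendsto_rpow_neg_atTop (by rw [sub_pos, one_lt_div hd']; exact hs)).comp
        tendsto_natCast_atTop_atTop).const_mul (K * t ^ (-s))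
      rwa [mul_zero] at this
    have hfreq : ∃ᶠ N in atTop, τ N < L + t :=
      frequently_lt_of_liminf_lt hbdd.isCoboundedUnder_ge (lt_add_of_pos_right L ht.1)
    obtain ⟨N₀, hτN₀, hN₀err, hN₀⟩ :=
      (hfreq.and_eventually ((herr.eventually_le_const ht.1).and (eventually_gt_atTop 0))).exists
    refine (key t ht N₀ hN₀).2.trans (add_le_add ?_ hN₀err)
    exact mul_le_mul_of_nonneg_left hτN₀.le (Real.rpow_nonneg (sub_nonneg.2 ht.2.le) _)
  have hf : Tendsto (fun t : ℝ => (1 - t) ^ (-s) * (L + t) + t) (𝓝[>] 0) (𝓝 L) := by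
    have h1 : ContinuousAt (fun t : ℝ => (1 - t) ^ (-s)) 0 :=
      (continuousAt_const.sub continuousAt_id).rpow_const (Or.inl (by norm_num))
    have : ContinuousAt (fun t : ℝ => (1 - t) ^ (-s) * (L + t) + t) 0 :=
      (h1.mul (continuousAt_const.add continuousAt_id)).add continuousAt_id
    simpa using this.tendsto.mono_left nhdsWithin_le_nhds
  refine ⟨L, tendsto_of_le_liminf_of_limsup_le le_rfl ?_ hbdd hcobdd⟩
  exact ge_of_tendsto hf (mem_of_superset (Ioo_mem_nhdsGT one_pos) hlimsup)

end Rescaling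

section UnitCube

variable {d : ℕ}

theorem unitCube_infinite (hd : d ≠ 0) : (unitCube d).Infinite := by
  let i : Fin d := ⟨0, Nat.pos_of_ne_zero hd⟩
  have := (Set.Icc_infinite (zero_lt_one' ℝ)).to_subtype
  refine Set.infinite_of_injective_forall_mem (f := fun r : Icc (0 : ℝ) 1 =>
    (WithLp.toLp 2 fun _ => (r : ℝ) : EuclideanSpace ℝ (Fin d))) (fun r r' h => ?_) ?_
  · exact Subtype.ext (congrFun (congrArg WithLp.ofLp h) i)
  · exact fun r _ => r.2

/-- The unit cube cut into `m ^ d` subcubes of side `1 / m`: `cellMap m t b` maps it onto the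
subcube with index `b`, shrunk by the factor `1 - t` about its centre, so that points in distinct
cells are at distance at least `t / m`. -/
noncomputable def cellMap (m : ℕ) (t : ℝ) (b : Fin d → Fin m) (x : EuclideanSpace ℝ (Fin d)) :
    EuclideanSpace ℝ (Fin d) :=
  ((1 - t) / m) • x + WithLp.toLp 2 fun i => ((b i : ℝ) + t / 2) / m

variable {m : ℕ} {t : ℝ}

theorem cellMap_apply (b : Fin d → Fin m) (x : EuclideanSpace ℝ (Fin d)) (i : Fin d) :
    cellMap m t b x i = ((1 - t) * x i + b i + t / 2) / m := by
  simp [cellMap]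
  ring

theorem dist_cellMap (ht : t ≤ 1) (b : Fin d → Fin m) (x y : EuclideanSpace ℝ (Fin d)) :
    dist (cellMap m t b x) (cellMap m t b y) = (1 - t) / m * dist x y := by
  rw [cellMap, cellMap, dist_add_right, dist_smul₀, Real.norm_of_nonneg
    (div_nonneg (sub_nonneg.2 ht) m.cast_nonneg)]

theorem cellMap_mem_unitCube (ht : t ∈ Icc (0 : ℝ) 1) (b : Fin d → Fin m)
    {x : EuclideanSpace ℝ (Fin d)} (hx : x ∈ unitCube d) : cellMap m t b x ∈ unitCube d := by
  intro i
  have hb : (b i : ℝ) + 1 ≤ m := by exact_mod_cast (b i).2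
  have hm : (0 : ℝ) < m := by linarith [(b i : ℕ).cast_nonneg (α := ℝ)]
  obtain ⟨ht0, ht1⟩ := ht
  obtain ⟨hx0, hx1⟩ := hx i
  rw [cellMap_apply, mem_Icc, div_le_one hm]
  constructor
  · positivity
  · nlinarith

theorem one_le_abs_natCast_sub_natCast {a b : ℕ} (h : a ≠ b) : 1 ≤ |(a : ℝ) - b| := by
  exact_mod_cast Int.one_le_abs (sub_ne_zero.2 (Nat.cast_injective.ne h : (a : ℤ) ≠ b))

theorem abs_sub_le_one_of_mem_unitCube {x y : EuclideanSpace ℝ (Fin d)} (hx : x ∈ unitCube d)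
    (hy : y ∈ unitCube d) (i : Fin d) : |x i - y i| ≤ 1 := by
  obtain ⟨hx0, hx1⟩ := hx i
  obtain ⟨hy0, hy1⟩ := hy i
  exact abs_sub_le_iff.2 ⟨by linarith, by linarith⟩

theorem mul_abs_le_dist_cellMap (ht : t ∈ Icc (0 : ℝ) 1) {b b' : Fin d → Fin m}
    {x y : EuclideanSpace ℝ (Fin d)} (hx : x ∈ unitCube d) (hy : y ∈ unitCube d) {i : Fin d}
    (hi : b i ≠ b' i) :
    t / m * |(b i : ℝ) - b' i| ≤ dist (cellMap m t b x) (cellMap m t b' y) := by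
  have hm : (0 : ℝ) < m := by exact_mod_cast (b i).pos
  have hΔ := one_le_abs_natCast_sub_natCast (Fin.val_injective.ne hi)
  have hw : |(1 - t) * (x i - y i)| ≤ 1 - t := by
    rw [abs_mul, abs_of_nonneg (sub_nonneg.2 ht.2)]
    exact mul_le_of_le_one_right (sub_nonneg.2 ht.2) (abs_sub_le_one_of_mem_unitCube hx hy i)
  have hsep := abs_sub_abs_le_abs_sub ((b i : ℝ) - b' i) (-((1 - t) * (x i - y i)))
  rw [abs_neg, sub_neg_eq_add] at hsep
  refine le_trans ?_ (PiLp.dist_apply_le _ _ i)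
  rw [Real.dist_eq, cellMap_apply, cellMap_apply, ← sub_div, abs_div, abs_of_pos hm,
    div_mul_eq_mul_div, div_le_div_iff_of_pos_right hm]
  calc t * |(b i : ℝ) - b' i| ≤ |(b i : ℝ) - b' i| - (1 - t) := by
        nlinarith [mul_nonneg (sub_nonneg.2 ht.2) (sub_nonneg.2 hΔ)]
    _ ≤ |(b i : ℝ) - b' i + (1 - t) * (x i - y i)| := by linarith
    _ = |(1 - t) * x i + b i + t / 2 - ((1 - t) * y i + b' i + t / 2)| := by ring_nf

theorem mul_one_add_abs_le_dist_cellMap (ht : t ∈ Icc (0 : ℝ) 1) {b b' : Fin d → Fin m}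
    (hbb : b ≠ b') {x y : EuclideanSpace ℝ (Fin d)} (hx : x ∈ unitCube d)
    (hy : y ∈ unitCube d) (i : Fin d) :
    t / (2 * m) * (1 + |(b i : ℝ) - b' i|) ≤ dist (cellMap m t b x) (cellMap m t b' y) := by
  have ht' : 0 ≤ t / m := div_nonneg ht.1 m.cast_nonneg
  have hhalf : t / (2 * m) = t / m / 2 := by ring
  by_cases hi : b i = b' i
  · obtain ⟨j, hj⟩ := Function.ne_iff.1 hbb
    have hΔ := one_le_abs_natCast_sub_natCast (Fin.val_injective.ne hj)
    have := mul_abs_le_dist_cellMap ht hx hy hj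
    rw [hi, sub_self, abs_zero, hhalf]
    nlinarith
  · have hΔ := one_le_abs_natCast_sub_natCast (Fin.val_injective.ne hi)
    have := mul_abs_le_dist_cellMap ht hx hy hi
    rw [hhalf]
    nlinarith

end UnitCube

theorem EuclideanSpace.dist_le_sqrt_card_mul {d : ℕ} {x y : EuclideanSpace ℝ (Fin d)} {r : ℝ}
    (hr : 0 ≤ r) (h : ∀ i, |x i - y i| ≤ r) : dist x y ≤ √d * r := by
  rw [EuclideanSpace.dist_eq]
  calc √(∑ i, dist (x i) (y i) ^ 2) ≤ √(∑ _i : Fin d, r ^ 2) :=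
        Real.sqrt_le_sqrt (Finset.sum_le_sum fun i _ => by
          rw [Real.dist_eq]
          exact pow_le_pow_left₀ (abs_nonneg _) (h i) 2)
    _ = √d * r := by simp [Real.sqrt_mul, Real.sqrt_sq hr]

section LowerBound

variable {d : ℕ} {s : ℝ}

theorem le_rieszEnergy_of_subset_unitCube (hs : 0 ≤ s) {m : ℕ} (hm : 0 < m)
    {ω : Finset (EuclideanSpace ℝ (Fin d))} (hω : ↑ω ⊆ unitCube d) :
    ENNReal.ofReal (((ω.card : ℝ) ^ 2 / ((m + 1) ^ d : ℕ) - ω.card) * (√d / m) ^ (-s)) ≤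
      rieszEnergy s ω := by
  have hm' : (0 : ℝ) < m := Nat.cast_pos.2 hm
  have hcard : (Fintype.piFinset fun _ : Fin d => Finset.range (m + 1)).card = (m + 1) ^ d := by
    simp
  rw [← hcard]
  -- `⌊m * x i⌋₊` takes `m + 1` values, since `x i = 1` is allowed.
  refine le_rieszEnergy_of_fibers hs (q := fun x i => ⌊(m : ℝ) * x i⌋₊) (fun x hx => ?_)
    (by positivity) fun x hx y hy hxy => ?_
  · simp only [Fintype.mem_piFinset, Finset.mem_range, Nat.lt_succ_iff]
    exact fun i => Nat.floor_le_of_le (mul_le_of_le_one_right hm'.le (hω hx i).2)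
  · refine EuclideanSpace.dist_le_sqrt_card_mul (by positivity) fun i => ?_
    have hfl := congrFun hxy i
    have hx0 : 0 ≤ (m : ℝ) * x i := mul_nonneg hm'.le (hω hx i).1
    have hy0 : 0 ≤ (m : ℝ) * y i := mul_nonneg hm'.le (hω hy i).1
    have h1 := Nat.floor_le hx0
    have h2 := Nat.lt_floor_add_one ((m : ℝ) * x i)
    have h3 := Nat.floor_le hy0
    have h4 := Nat.lt_floor_add_one ((m : ℝ) * y i)
    simp only at hfl
    rw [hfl] at h1 h2
    have hmul : (m : ℝ) * |x i - y i| ≤ 1 := by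
      rw [← abs_of_pos hm', ← abs_mul, mul_sub, abs_sub_le_iff]
      constructor <;> linarith
    calc |x i - y i| = (m : ℝ)⁻¹ * (m * |x i - y i|) := by field_simp
      _ ≤ (m : ℝ)⁻¹ * 1 := by gcongr
      _ = _ := mul_one _

theorem mul_rpow_le_toReal_minRieszEnergy_unitCube (hd : d ≠ 0) (hs : 0 ≤ s) {m N : ℕ}
    (hm : 0 < m) (hN : 2 * (m + 1) ^ d ≤ N) :
    N * (√d / m) ^ (-s) ≤ (minRieszEnergy s (unitCube d) N).toReal := by
  have hN' : (2 : ℝ) * ((m + 1) ^ d : ℕ) ≤ N := by exact_mod_cast hN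
  have hcount : (N : ℝ) ≤ (N : ℝ) ^ 2 / ((m + 1) ^ d : ℕ) - N := by
    rw [le_sub_iff_add_le, le_div_iff₀ (by positivity)]
    nlinarith
  rw [← ENNReal.ofReal_le_iff_le_toReal (minRieszEnergy_ne_top (unitCube_infinite hd) N)]
  refine le_iInf₂ fun ω hω => le_iInf fun hcard => ?_
  refine le_trans ?_ (le_rieszEnergy_of_subset_unitCube hs hm hω)
  rw [hcard]
  exact ENNReal.ofReal_le_ofReal (mul_le_mul_of_nonneg_right hcount (by positivity))

theorem exists_pos_eventually_le_toReal_minRieszEnergy_unitCube (hd : d ≠ 0) (hs : 0 ≤ s) :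
    ∃ c : ℝ, 0 < c ∧ ∀ᶠ N : ℕ in atTop,
      c * (N : ℝ) ^ (1 + s / d) ≤ (minRieszEnergy s (unitCube d) N).toReal := by
  have hd' : (0 : ℝ) < d := Nat.cast_pos.2 (Nat.pos_of_ne_zero hd)
  refine ⟨(8 * √d) ^ (-s), by positivity, ?_⟩
  have hx : Tendsto (fun N : ℕ => (N : ℝ) ^ (d⁻¹ : ℝ)) atTop atTop :=
    (tendsto_rpow_atTop (by positivity)).comp tendsto_natCast_atTop_atTop
  filter_upwards [hx.eventually_ge_atTop 8] with N hN
  set x := (N : ℝ) ^ (d⁻¹ : ℝ)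
  have hxd : x ^ d = N := Real.rpow_inv_natCast_pow N.cast_nonneg hd
  have hm8 : x / 8 ≤ ⌊x / 4⌋₊ := by linarith [Nat.lt_floor_add_one (x / 4)]
  have hm4 : (⌊x / 4⌋₊ : ℝ) ≤ x / 4 := Nat.floor_le (by positivity)
  have hm : 0 < ⌊x / 4⌋₊ := (Nat.cast_pos (α := ℝ)).1 (by linarith)
  have hmN : 2 * (⌊x / 4⌋₊ + 1) ^ d ≤ N := by
    have h2d : (2 : ℝ) ≤ 2 ^ d := le_self_pow₀ one_le_two hd
    have : (2 : ℝ) * ((⌊x / 4⌋₊ : ℝ) + 1) ^ d ≤ N :=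
      calc (2 : ℝ) * ((⌊x / 4⌋₊ : ℝ) + 1) ^ d ≤ 2 ^ d * (x / 2) ^ d := by
            gcongr
            linarith
        _ = N := by rw [← mul_pow, mul_div_cancel₀ _ two_ne_zero, hxd]
    exact_mod_cast this
  refine le_trans ?_ (mul_rpow_le_toReal_minRieszEnergy_unitCube hd hs hm hmN)
  calc (8 * √d) ^ (-s) * (N : ℝ) ^ (1 + s / d) = N * (8 * √d / x) ^ (-s) := by
        rw [Real.div_rpow (by positivity) (by positivity), Real.rpow_neg (by positivity) (x := x),
          ← Real.rpow_mul N.cast_nonneg, Real.rpow_add' N.cast_nonneg (by positivity),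
          Real.rpow_one]
        field_simp
    _ ≤ N * (√d / ⌊x / 4⌋₊) ^ (-s) := by
        gcongr N * ?_
        refine Real.rpow_le_rpow_of_nonpos (by positivity) ?_ (neg_nonpos.2 hs)
        rw [div_le_div_iff₀ (by positivity) (by positivity)]
        nlinarith [Real.sqrt_nonneg d]

end LowerBound

section Pasting

variable {d m : ℕ} {s t : ℝ}

local notation "E" => EuclideanSpace ℝ (Fin d)

theorem sum_rieszKernel_cellMap_le (hd : d ≠ 0) (hs : (d : ℝ) < s) (ht : t ∈ Icc (0 : ℝ) 1)
    (ht0 : 0 < t) {ω : Finset E} (hω : ↑ω ⊆ unitCube d) (b : Fin d → Fin m) :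
    ∑ b' ∈ Finset.univ.erase b, ∑ x ∈ ω.image (cellMap m t b),
        ∑ y ∈ ω.image (cellMap m t b'), rieszKernel s x y ≤
      ENNReal.ofReal (ω.card ^ 2 * (t / (2 * m)) ^ (-s) *
        (∑' n : ℤ, (1 + |(n : ℝ)|) ^ (-(s / d))) ^ d) := by
  have hm : (0 : ℝ) < m := by exact_mod_cast (b ⟨0, Nat.pos_of_ne_zero hd⟩).pos
  have hs0 : 0 ≤ s := (Nat.cast_nonneg d).trans hs.le
  set P : (Fin d → Fin m) → ℝ := fun b' => ∏ i, (1 + |((b i : ℕ) : ℝ) - b' i|) ^ (-(s / d))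
  have hkernel : ∀ b' ∈ Finset.univ.erase b, ∀ x ∈ ω.image (cellMap m t b),
      ∀ y ∈ ω.image (cellMap m t b'),
        rieszKernel s x y ≤ ENNReal.ofReal ((t / (2 * m)) ^ (-s) * P b') := by
    intro b' hb' x hx y hy
    obtain ⟨u, hu, rfl⟩ := Finset.mem_image.1 hx
    obtain ⟨v, hv, rfl⟩ := Finset.mem_image.1 hy
    exact rieszKernel_le_prod_rpow hd hs0 (by positivity)
      (fun i => le_add_of_nonneg_right (abs_nonneg _))
      (mul_one_add_abs_le_dist_cellMap ht (Finset.ne_of_mem_erase hb').symm (hω hu) (hω hv))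
  calc ∑ b' ∈ Finset.univ.erase b, ∑ x ∈ ω.image (cellMap m t b),
        ∑ y ∈ ω.image (cellMap m t b'), rieszKernel s x y
      ≤ ∑ b' ∈ Finset.univ.erase b,
          ((ω.card ^ 2 : ℕ) : ℝ≥0∞) * ENNReal.ofReal ((t / (2 * m)) ^ (-s) * P b') := by
        refine Finset.sum_le_sum fun b' hb' => ?_
        refine (Finset.sum_le_sum fun x hx => Finset.sum_le_sum fun y hy =>
          hkernel b' hb' x hx y hy).trans ?_
        simp only [Finset.sum_const, nsmul_eq_mul, ← mul_assoc, ← Nat.cast_mul]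
        gcongr
        rw [sq]
        exact Nat.mul_le_mul Finset.card_image_le Finset.card_image_le
    _ ≤ ∑ b', ((ω.card ^ 2 : ℕ) : ℝ≥0∞) * ENNReal.ofReal ((t / (2 * m)) ^ (-s) * P b') :=
        Finset.sum_le_sum_of_subset (Finset.erase_subset _ _)
    _ = ENNReal.ofReal (ω.card ^ 2 * (t / (2 * m)) ^ (-s) * ∑ b', P b') := by
        rw [← ENNReal.ofReal_natCast, ← Finset.mul_sum, ← ENNReal.ofReal_sum_of_nonneg
          (fun _ _ => by positivity), ← ENNReal.ofReal_mul (by positivity), Finset.mul_sum,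
          Finset.mul_sum]
        push_cast
        exact congrArg _ (Finset.sum_congr rfl fun _ _ => by ring)
    _ ≤ _ := ENNReal.ofReal_le_ofReal (mul_le_mul_of_nonneg_left
        (sum_prod_one_add_abs_rpow_le (by rwa [one_lt_div (by positivity)]) m _) (by positivity))

theorem exists_rieszEnergy_le_of_unitCube (hd : d ≠ 0) (hs : (d : ℝ) < s) (hm : 0 < m)
    (ht : t ∈ Ioo (0 : ℝ) 1) {ω : Finset E} (hω : ↑ω ⊆ unitCube d) :
    ∃ Ω : Finset E, ↑Ω ⊆ unitCube d ∧ Ω.card = m ^ d * ω.card ∧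
      rieszEnergy s Ω ≤ ENNReal.ofReal (m ^ d * ((1 - t) / m) ^ (-s)) * rieszEnergy s ω +
        ENNReal.ofReal (m ^ d * (ω.card ^ 2 * (t / (2 * m)) ^ (-s) *
          (∑' n : ℤ, (1 + |(n : ℝ)|) ^ (-(s / d))) ^ d)) := by
  have ht' : t ∈ Icc (0 : ℝ) 1 := Ioo_subset_Icc_self ht
  have hc : 0 < (1 - t) / m := div_pos (sub_pos.2 ht.2) (Nat.cast_pos.2 hm)
  have hinj (b : Fin d → Fin m) : Function.Injective (cellMap m t b) :=
    injective_of_dist_eq_mul hc.ne' (dist_cellMap ht.2.le b)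
  have hdisj : ((Finset.univ : Finset (Fin d → Fin m)) : Set _).PairwiseDisjoint
      fun b => ω.image (cellMap m t b) := by
    intro b _ b' _ hbb
    refine Finset.disjoint_left.2 fun z hz hz' => ?_
    obtain ⟨u, hu, rfl⟩ := Finset.mem_image.1 hz
    obtain ⟨v, hv, huv⟩ := Finset.mem_image.1 hz'
    have := mul_one_add_abs_le_dist_cellMap ht' hbb (hω hu) (hω hv) ⟨0, Nat.pos_of_ne_zero hd⟩
    rw [← huv, dist_self] at this
    exact this.not_gt (mul_pos (div_pos ht.1 (by positivity)) (by positivity))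
  refine ⟨Finset.univ.biUnion fun b => ω.image (cellMap m t b), ?_, ?_, ?_⟩
  · intro z hz
    obtain ⟨b, -, hz⟩ := Finset.mem_biUnion.1 hz
    obtain ⟨u, hu, rfl⟩ := Finset.mem_image.1 hz
    exact cellMap_mem_unitCube ht' b (hω hu)
  · simp [Finset.card_biUnion hdisj, Finset.card_image_of_injective _ (hinj _)]
  rw [rieszEnergy_biUnion hdisj]
  refine add_le_add (le_of_eq ?_) ?_
  · simp only [rieszEnergy_image_of_dist_eq hc (dist_cellMap ht.2.le _), Finset.sum_const,
      Finset.card_univ, Fintype.card_fun, Fintype.card_fin, nsmul_eq_mul]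
    rw [ENNReal.ofReal_mul (by positivity), ← mul_assoc]
    norm_cast
  · refine (Finset.sum_le_sum fun b _ =>
      sum_rieszKernel_cellMap_le hd hs ht' ht.1 hω b).trans_eq ?_
    rw [Finset.sum_const, nsmul_eq_mul, ← ENNReal.ofReal_natCast,
      ← ENNReal.ofReal_mul (Nat.cast_nonneg _)]
    simp

theorem minRieszEnergy_unitCube_le (hd : d ≠ 0) (hs : (d : ℝ) < s) (hm : 0 < m)
    (ht : t ∈ Ioo (0 : ℝ) 1) (N : ℕ) :
    minRieszEnergy s (unitCube d) (m ^ d * N) ≤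
      ENNReal.ofReal (m ^ d * ((1 - t) / m) ^ (-s)) * minRieszEnergy s (unitCube d) N +
        ENNReal.ofReal (m ^ d * (N ^ 2 * (t / (2 * m)) ^ (-s) *
          (∑' n : ℤ, (1 + |(n : ℝ)|) ^ (-(s / d))) ^ d)) := by
  have hc : 0 < (1 - t) / m := div_pos (sub_pos.2 ht.2) (Nat.cast_pos.2 hm)
  refine le_mul_minRieszEnergy_add (ENNReal.ofReal_pos.2 (by positivity)).ne' ENNReal.ofReal_ne_top
    fun ω hω hN => ?_
  obtain ⟨Ω, hΩ, hcard, hE⟩ := exists_rieszEnergy_le_of_unitCube hd hs hm ht hω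
  rw [← hN, ← hcard]
  exact (minRieszEnergy_le hΩ).trans hE

theorem toReal_minRieszEnergy_unitCube_le (hd : d ≠ 0) (hs : (d : ℝ) < s) :
    ∃ K : ℝ, ∀ m N : ℕ, 0 < m → 0 < N → ∀ t ∈ Ioo (0 : ℝ) 1,
      (minRieszEnergy s (unitCube d) (m ^ d * N)).toReal ≤ (m : ℝ) ^ ((d : ℝ) + s) *
        ((1 - t) ^ (-s) * (minRieszEnergy s (unitCube d) N).toReal + K * t ^ (-s) * N ^ 2) := by
  have hS : 0 ≤ ∑' n : ℤ, (1 + |(n : ℝ)|) ^ (-(s / d)) := tsum_nonneg fun _ => by positivity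
  refine ⟨2 ^ s * (∑' n : ℤ, (1 + |(n : ℝ)|) ^ (-(s / d))) ^ d, fun m N hm _ t ht => ?_⟩
  have hm' : (0 : ℝ) < m := Nat.cast_pos.2 hm
  have ht' : 0 < 1 - t := sub_pos.2 ht.2
  have hA : 0 ≤ (m : ℝ) ^ d * ((1 - t) / m) ^ (-s) :=
    mul_nonneg (by positivity) (Real.rpow_nonneg (div_nonneg ht'.le hm'.le) _)
  have hR : 0 ≤ (m : ℝ) ^ d * (N ^ 2 * (t / (2 * m)) ^ (-s) *
      (∑' n : ℤ, (1 + |(n : ℝ)|) ^ (-(s / d))) ^ d) :=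
    mul_nonneg (by positivity) (mul_nonneg (mul_nonneg (by positivity)
      (Real.rpow_nonneg (div_nonneg ht.1.le (by positivity)) _)) (pow_nonneg hS d))
  have h := minRieszEnergy_unitCube_le hd hs hm ht N
  rw [← ENNReal.ofReal_toReal (minRieszEnergy_ne_top (unitCube_infinite hd) N),
    ← ENNReal.ofReal_mul hA, ← ENNReal.ofReal_add (mul_nonneg hA ENNReal.toReal_nonneg) hR] at h
  refine (ENNReal.toReal_le_of_le_ofReal
    (add_nonneg (mul_nonneg hA ENNReal.toReal_nonneg) hR) h).trans_eq ?_
  have hpow : (m : ℝ) ^ ((d : ℝ) + s) = m ^ d * m ^ s := by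
    rw [Real.rpow_add hm', Real.rpow_natCast]
  rw [hpow, Real.div_rpow ht'.le hm'.le, Real.div_rpow ht.1.le (by positivity),
    Real.mul_rpow zero_le_two hm'.le, Real.rpow_neg hm'.le, Real.rpow_neg (by positivity),
    Real.rpow_neg zero_le_two]
  field_simp

end Pasting

/-- for `s > d`, the limit `g_{s,d}(U^d) = lim_N ℰ_s(U^d,N)/N^{1+s/d}` exists
and is a finite positive real number. -/
theorem tendsto_minRieszEnergy_unitCube (d : ℕ) (hd : 1 ≤ d) (s : ℝ) (hs : (d : ℝ) < s) :
    ∃ C : ℝ, 0 < C ∧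
      Tendsto
        (fun N : ℕ =>
          minRieszEnergy s (unitCube d) N / ENNReal.ofReal ((N : ℝ) ^ (1 + s / (d : ℝ))))
        atTop (𝓝 (ENNReal.ofReal C)) := by
  have hd' : d ≠ 0 := Nat.one_le_iff_ne_zero.1 hd
  have hs0 : 0 ≤ s := (Nat.cast_nonneg d).trans hs.le
  have hfin := minRieszEnergy_ne_top (s := s) (unitCube_infinite hd')
  obtain ⟨K, hrec⟩ := toReal_minRieszEnergy_unitCube_le hd' hs
  obtain ⟨C, hC⟩ := exists_tendsto_div_rpow_of_le_rpow_mul hd' hs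
    (fun _ => ENNReal.toReal_nonneg)
    (fun _ N hle => ENNReal.toReal_mono (hfin N) (minRieszEnergy_mono _ hle)) hrec
  obtain ⟨c, hc, hlow⟩ := exists_pos_eventually_le_toReal_minRieszEnergy_unitCube hd' hs0
  have hcC : c ≤ C := ge_of_tendsto hC <| (hlow.and (eventually_gt_atTop 0)).mono
    fun N hN => (le_div_iff₀ (Real.rpow_pos_of_pos (Nat.cast_pos.2 hN.2) _)).2 hN.1
  refine ⟨C, hc.trans_le hcC, (ENNReal.tendsto_ofReal hC).congr' ?_⟩
  filter_upwards [eventually_gt_atTop 0] with N hN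
  rw [ENNReal.ofReal_div_of_pos (by positivity), ENNReal.ofReal_toReal (hfin N)]
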